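/- arXiv:2305.03549 — 3 statements merged into one kernel-verified Lean document; each statement's English description precedes it below -/
import Mathlib

section
/- For every θ ∈ [0, 2π), the average over r of A_∞(r,θ) equals 1/2; that is, (1/√2) ∫_{-1/√2}^{1/√2} A_∞(r,θ) dr = 1/2. -/
open Real MeasureTheory

/-- The unit square tilted by angle `θ` and centered at `(r, 0)`. -/
noncomputable def tiltedSquare (r θ : ℝ) : Set (ℝ × ℝ) :=
  {p | ∃ x y : ℝ, |x| ≤ 1/2 ∧ |y| ≤ 1/2 ∧
    p = (r + x * Real.cos θ - y * Real.sin θ, x * Real.sin θ + y * Real.cos θ)}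

/-- The area of the portion of the tilted shifted unit square lying in the left half-plane. -/
noncomputable def Ainf (r θ : ℝ) : ℝ :=
  (volume (tiltedSquare r θ ∩ {p : ℝ × ℝ | p.1 ≤ 0})).toReal

/-- Rotation by `θ` as a linear map on `ℝ × ℝ`. -/
noncomputable def rotMap (θ : ℝ) : (ℝ × ℝ) →ₗ[ℝ] (ℝ × ℝ) where
  toFun p := (p.1 * Real.cos θ - p.2 * Real.sin θ, p.1 * Real.sin θ + p.2 * Real.cos θ)
  map_add' p q := by simp [Prod.ext_iff]; constructor <;> ring
  map_smul' c p := by simp [Prod.ext_iff]; constructor <;> ring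

lemma rotMap_det (θ : ℝ) : LinearMap.det (rotMap θ) = 1 := by
  rw [← LinearMap.det_toMatrix (Module.Basis.finTwoProd ℝ)]
  have h : (LinearMap.toMatrix (Module.Basis.finTwoProd ℝ) (Module.Basis.finTwoProd ℝ) (rotMap θ)) =
      !![Real.cos θ, -Real.sin θ; Real.sin θ, Real.cos θ] := by
    ext i j
    fin_cases i <;> fin_cases j <;>
      simp [LinearMap.toMatrix_apply, Module.Basis.coe_finTwoProd_repr, rotMap,
        Module.Basis.finTwoProd_zero, Module.Basis.finTwoProd_one]
  rw [h, Matrix.det_fin_two_of]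
  nlinarith [Real.sin_sq_add_cos_sq θ]

/-- The standard square as a closed interval in `ℝ × ℝ`. -/
def stdSq : Set (ℝ × ℝ) := Set.Icc (-(1/2), -(1/2)) (1/2, 1/2)

lemma volume_stdSq : volume stdSq = 1 := by
  rw [stdSq, Set.Icc_prod_eq, Measure.volume_eq_prod, Measure.prod_prod]
  simp only [Real.volume_Icc]
  norm_num

lemma tilted_eq (r θ : ℝ) :
    tiltedSquare r θ = (fun p => ((r, 0) : ℝ × ℝ) + p) '' (rotMap θ '' stdSq) := by
  ext p
  simp only [tiltedSquare, Set.mem_setOf_eq, Set.mem_image, stdSq, Set.Icc_prod_eq,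
    Set.mem_prod, Set.mem_Icc]
  constructor
  · rintro ⟨x, y, hx, hy, rfl⟩
    exact ⟨(x * Real.cos θ - y * Real.sin θ, x * Real.sin θ + y * Real.cos θ),
      ⟨(x, y), ⟨⟨(abs_le.1 hx).1, (abs_le.1 hx).2⟩, ⟨(abs_le.1 hy).1, (abs_le.1 hy).2⟩⟩, rfl⟩,
      by simp [rotMap, Prod.ext_iff]; ring⟩
  · rintro ⟨q, ⟨⟨x, y⟩, ⟨⟨hx1, hx2⟩, ⟨hy1, hy2⟩⟩, rfl⟩, rfl⟩
    exact ⟨x, y, abs_le.2 ⟨hx1, hx2⟩, abs_le.2 ⟨hy1, hy2⟩, by simp [rotMap, Prod.ext_iff]; ring⟩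

lemma volume_tilted (r θ : ℝ) : volume (tiltedSquare r θ) = 1 := by
  rw [tilted_eq, Set.image_add_left, measure_preimage_add,
    Measure.addHaar_image_linearMap, rotMap_det, volume_stdSq]
  simp

lemma isCompact_tilted (r θ : ℝ) : IsCompact (tiltedSquare r θ) := by
  rw [tilted_eq]
  exact ((isCompact_Icc.image (rotMap θ).continuous_of_finiteDimensional).image
    (continuous_const.add continuous_id))

lemma measurableSet_tilted (r θ : ℝ) : MeasurableSet (tiltedSquare r θ) :=
  (isCompact_tilted r θ).measurableSet

lemma volume_line_zero : volume {p : ℝ × ℝ | p.1 = 0} = 0 := by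
  have h : {p : ℝ × ℝ | p.1 = 0} = ({0} : Set ℝ) ×ˢ (Set.univ : Set ℝ) := by
    ext ⟨x, y⟩; simp [eq_comm]
  rw [h, Measure.volume_eq_prod, Measure.prod_prod]
  simp

lemma volume_tilted_inter_ne_top (r θ : ℝ) (s : Set (ℝ × ℝ)) :
    volume (tiltedSquare r θ ∩ s) ≠ ⊤ := by
  refine ne_of_lt (lt_of_le_of_lt (measure_mono Set.inter_subset_left) ?_)
  rw [volume_tilted]; exact ENNReal.one_lt_top

/-- Point reflection sends the left part of the square at `-r` to the right part at `r`. -/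
lemma neg_image (r θ : ℝ) :
    (fun p : ℝ × ℝ => -p) '' (tiltedSquare (-r) θ ∩ {p : ℝ × ℝ | p.1 ≤ 0}) =
      tiltedSquare r θ ∩ {p : ℝ × ℝ | 0 ≤ p.1} := by
  ext p
  simp only [Set.mem_image, Set.mem_inter_iff, Set.mem_setOf_eq, tiltedSquare]
  constructor
  · rintro ⟨q, ⟨⟨x, y, hx, hy, rfl⟩, hq⟩, rfl⟩
    refine ⟨⟨-x, -y, by rwa [abs_neg], by rwa [abs_neg], by simp [Prod.ext_iff]; constructor <;> ring⟩,
      by simpa using hq⟩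
  · rintro ⟨⟨x, y, hx, hy, rfl⟩, hp⟩
    refine ⟨(-(r + x * Real.cos θ - y * Real.sin θ), -(x * Real.sin θ + y * Real.cos θ)),
      ⟨⟨-x, -y, by rwa [abs_neg], by rwa [abs_neg], by simp [Prod.ext_iff]; constructor <;> ring⟩,
        by simpa using hp⟩, by simp⟩

lemma Ainf_add (r θ : ℝ) : Ainf r θ + Ainf (-r) θ = 1 := by
  have hT := measurableSet_tilted r θ
  have hneg : volume (tiltedSquare (-r) θ ∩ {p : ℝ × ℝ | p.1 ≤ 0}) =
      volume (tiltedSquare r θ ∩ {p : ℝ × ℝ | 0 ≤ p.1}) := by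
    rw [← neg_image r θ, Set.image_neg_eq_neg, Measure.measure_neg]
  have hsum : volume (tiltedSquare r θ ∩ {p : ℝ × ℝ | p.1 ≤ 0}) +
      volume (tiltedSquare r θ ∩ {p : ℝ × ℝ | 0 ≤ p.1}) = 1 := by
    have hmeas : MeasurableSet (tiltedSquare r θ ∩ {p : ℝ × ℝ | 0 ≤ p.1}) :=
      hT.inter (measurableSet_le measurable_const measurable_fst)
    have hu : (tiltedSquare r θ ∩ {p : ℝ × ℝ | p.1 ≤ 0}) ∪
        (tiltedSquare r θ ∩ {p : ℝ × ℝ | 0 ≤ p.1}) = tiltedSquare r θ := by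
      rw [← Set.inter_union_distrib_left]
      have : {p : ℝ × ℝ | p.1 ≤ 0} ∪ {p : ℝ × ℝ | 0 ≤ p.1} = Set.univ := by
        ext p; simp [le_total]
      rw [this, Set.inter_univ]
    have hi : (tiltedSquare r θ ∩ {p : ℝ × ℝ | p.1 ≤ 0}) ∩
        (tiltedSquare r θ ∩ {p : ℝ × ℝ | 0 ≤ p.1}) ⊆ {p : ℝ × ℝ | p.1 = 0} := by
      rintro p ⟨⟨-, h1⟩, -, h2⟩
      exact le_antisymm h1 h2
    have key := measure_union_add_inter (μ := volume)
      (tiltedSquare r θ ∩ {p : ℝ × ℝ | p.1 ≤ 0}) hmeas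
    rw [hu] at key
    have hz : volume ((tiltedSquare r θ ∩ {p : ℝ × ℝ | p.1 ≤ 0}) ∩
        (tiltedSquare r θ ∩ {p : ℝ × ℝ | 0 ≤ p.1})) = 0 :=
      measure_mono_null hi volume_line_zero
    rw [hz, add_zero, volume_tilted] at key
    exact key.symm
  unfold Ainf
  rw [hneg, ← ENNReal.toReal_add (volume_tilted_inter_ne_top _ _ _)
    (volume_tilted_inter_ne_top _ _ _), hsum]
  simp

lemma Ainf_antitone (θ : ℝ) : Antitone (fun r => Ainf r θ) := by
  intro r₁ r₂ h
  have key : ∀ r : ℝ, volume (tiltedSquare r θ ∩ {p : ℝ × ℝ | p.1 ≤ 0}) =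
      volume (tiltedSquare 0 θ ∩ {p : ℝ × ℝ | p.1 ≤ -r}) := by
    intro r
    have himg : tiltedSquare r θ ∩ {p : ℝ × ℝ | p.1 ≤ 0} =
        (fun p => ((r, 0) : ℝ × ℝ) + p) '' (tiltedSquare 0 θ ∩ {p : ℝ × ℝ | p.1 ≤ -r}) := by
      ext p
      simp only [Set.mem_inter_iff, Set.mem_setOf_eq, tiltedSquare, Set.mem_image]
      constructor
      · rintro ⟨⟨x, y, hx, hy, rfl⟩, hp⟩
        refine ⟨(x * Real.cos θ - y * Real.sin θ, x * Real.sin θ + y * Real.cos θ),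
          ⟨⟨x, y, hx, hy, by simp [Prod.ext_iff]⟩, by simp at hp ⊢; linarith⟩,
          by simp [Prod.ext_iff]; ring⟩
      · rintro ⟨q, ⟨⟨x, y, hx, hy, rfl⟩, hq⟩, rfl⟩
        refine ⟨⟨x, y, hx, hy, by simp [Prod.ext_iff]; ring⟩, by simp at hq ⊢; linarith⟩
    rw [himg, Set.image_add_left, measure_preimage_add]
  simp only [Ainf]
  rw [key r₁, key r₂]
  refine ENNReal.toReal_mono ?_ (measure_mono (Set.inter_subset_inter_right _ ?_))
  · have := volume_tilted_inter_ne_top 0 θ {p : ℝ × ℝ | p.1 ≤ -r₁}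
    exact this
  · intro p hp
    simp only [Set.mem_setOf_eq] at hp ⊢
    linarith

theorem Ainf_avg_half (θ : ℝ) (hθ : θ ∈ Set.Ico (0:ℝ) (2*π)) :
    (1/Real.sqrt 2) * ∫ r in (-(1/Real.sqrt 2))..(1/Real.sqrt 2), Ainf r θ = 1/2 := by
  set a : ℝ := 1/Real.sqrt 2 with ha
  have hanti := Ainf_antitone θ
  have hint : IntervalIntegrable (fun r => Ainf r θ) volume (-a) a :=
    hanti.intervalIntegrable
  have hmono : Monotone (fun r => Ainf (-r) θ) := fun x y hxy => hanti (neg_le_neg hxy)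
  have hint' : IntervalIntegrable (fun r => Ainf (-r) θ) volume (-a) a :=
    hmono.intervalIntegrable
  have hcomp : ∫ r in (-a)..a, Ainf (-r) θ = ∫ r in (-a)..a, Ainf r θ := by
    rw [intervalIntegral.integral_comp_neg (fun r => Ainf r θ)]
    simp
  have hsum : (∫ r in (-a)..a, Ainf r θ) + (∫ r in (-a)..a, Ainf (-r) θ)
      = ∫ r in (-a)..a, (1 : ℝ) := by
    rw [← intervalIntegral.integral_add hint hint']
    congr 1
    ext r
    exact Ainf_add r θ
  have hone : (∫ r in (-a)..a, (1 : ℝ)) = 2 * a := by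
    rw [intervalIntegral.integral_const]
    simp [two_mul]
  rw [hcomp] at hsum
  have hval : (∫ r in (-a)..a, Ainf r θ) = a := by linarith [hsum, hone]
  rw [hval, ha]
  have h2 : Real.sqrt 2 * Real.sqrt 2 = 2 := Real.mul_self_sqrt (by norm_num)
  field_simp
  rw [Real.sq_sqrt (by norm_num : (0:ℝ) ≤ 2)]
end

section
/- For θ ∈ (0, π/4) and -sin(θ+π/4)/√2 ≤ r < -cos(θ+π/4)/√2, one has A_∞(r,θ) = 1 - (r + sin(π/4+θ)/√2)² / sin(2θ). -/
open Real MeasureTheory Set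

noncomputable def rotL (θ : ℝ) : (ℝ × ℝ) →ₗ[ℝ] (ℝ × ℝ) where
  toFun p := (p.1 * Real.cos θ - p.2 * Real.sin θ, p.1 * Real.sin θ + p.2 * Real.cos θ)
  map_add' p q := by simp [Prod.ext_iff]; constructor <;> ring
  map_smul' m p := by simp [Prod.ext_iff]; constructor <;> ring

lemma rotL_det (θ : ℝ) : LinearMap.det (rotL θ) = 1 := by
  rw [← LinearMap.det_toMatrix (Module.Basis.finTwoProd ℝ)]
  rw [Matrix.det_fin_two]
  simp [LinearMap.toMatrix_apply, rotL, Module.Basis.finTwoProd_zero, Module.Basis.finTwoProd_one,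
    Module.Basis.coe_finTwoProd_repr]
  ring_nf
  rw [← Real.sin_sq_add_cos_sq θ]; ring

-- step 1 : express intersection as image of a planar region
lemma step1 (r θ : ℝ) :
    tiltedSquare r θ ∩ {p : ℝ × ℝ | p.1 ≤ 0}
      = (fun p => ((r, 0) : ℝ × ℝ) + rotL θ p) ''
        ((Set.Icc (-(1:ℝ)/2) (1/2) ×ˢ Set.Icc (-(1:ℝ)/2) (1/2)) ∩
          {p : ℝ × ℝ | Real.cos θ * p.1 - Real.sin θ * p.2 ≤ -r}) := by
  have hsq : tiltedSquare r θ = (fun p => ((r, 0) : ℝ × ℝ) + rotL θ p) ''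
      (Set.Icc (-(1:ℝ)/2) (1/2) ×ˢ Set.Icc (-(1:ℝ)/2) (1/2)) := by
    ext p
    simp only [tiltedSquare, Set.mem_setOf_eq, Set.mem_image, Set.mem_prod, Set.mem_Icc,
      rotL, LinearMap.coe_mk, AddHom.coe_mk, Prod.mk_add_mk, abs_le]
    constructor
    · rintro ⟨x, y, hx, hy, rfl⟩
      refine ⟨(x, y), ⟨⟨by linarith [hx.1], by linarith [hx.2]⟩,
        ⟨by linarith [hy.1], by linarith [hy.2]⟩⟩, ?_⟩
      simp [Prod.ext_iff]; ring
    · rintro ⟨⟨x, y⟩, ⟨⟨hx1, hx2⟩, ⟨hy1, hy2⟩⟩, rfl⟩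
      exact ⟨x, y, ⟨by linarith, by linarith⟩, ⟨by linarith, by linarith⟩,
        by simp [Prod.ext_iff]; ring⟩
  have hpre : (fun p => ((r, 0) : ℝ × ℝ) + rotL θ p) ⁻¹' {p : ℝ × ℝ | p.1 ≤ 0}
      = {p : ℝ × ℝ | Real.cos θ * p.1 - Real.sin θ * p.2 ≤ -r} := by
    ext ⟨x, y⟩
    simp only [Set.mem_preimage, Set.mem_setOf_eq, rotL, LinearMap.coe_mk, AddHom.coe_mk,
      Prod.mk_add_mk]
    constructor <;> intro h <;> nlinarith
  rw [hsq, ← hpre, Set.image_inter_preimage]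

-- step 2 : volume of image equals volume of set
lemma step2 (r θ : ℝ) (E : Set (ℝ × ℝ)) :
    volume ((fun p => ((r, 0) : ℝ × ℝ) + rotL θ p) '' E) = volume E := by
  have : (fun p => ((r, 0) : ℝ × ℝ) + rotL θ p) '' E
      = (((r, 0) : ℝ × ℝ) + ·) '' ((rotL θ) '' E) := by
    rw [Set.image_image]
  rw [this, Set.image_add_left, measure_preimage_add,
    Measure.addHaar_image_linearMap, rotL_det]
  simp

lemma volE (c s r : ℝ) (hc : 0 < c) (hs : 0 < s) (hsc : s < c)
    (h1 : -((s+c)/2) ≤ r) (h2 : r < (s-c)/2) :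
    volume ((Set.Icc (-(1:ℝ)/2) (1/2) ×ˢ Set.Icc (-(1:ℝ)/2) (1/2)) ∩
        {p : ℝ × ℝ | c * p.1 - s * p.2 ≤ -r})
      = ENNReal.ofReal (1 - (r + (s+c)/2)^2 / (2*s*c)) := by
  set g : ℝ → ℝ := fun x => max (-(1/2)) ((c*x + r)/s) with hg
  have hgc : Continuous g := continuous_const.max (by continuity)
  have hA : (Set.Icc (-(1:ℝ)/2) (1/2) ×ˢ Set.Icc (-(1:ℝ)/2) (1/2)) ∩
        {p : ℝ × ℝ | c * p.1 - s * p.2 ≤ -r}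
      = {p : ℝ × ℝ | p.1 ∈ Set.Icc (-(1:ℝ)/2) (1/2) ∧ p.2 ∈ Set.Icc (g p.1) (1/2)} := by
    ext ⟨x, y⟩
    simp only [Set.mem_inter_iff, Set.mem_prod, Set.mem_Icc, Set.mem_setOf_eq, hg, max_le_iff]
    constructor
    · rintro ⟨⟨hx, hy1, hy2⟩, hle⟩
      exact ⟨hx, ⟨by linarith, (div_le_iff₀ hs).mpr (by nlinarith)⟩, hy2⟩
    · rintro ⟨hx, ⟨hy1, hy3⟩, hy2⟩
      have := (div_le_iff₀ hs).mp hy3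
      exact ⟨⟨hx, by linarith, hy2⟩, by nlinarith⟩
  have hEm : MeasurableSet ((Set.Icc (-(1:ℝ)/2) (1/2) ×ˢ Set.Icc (-(1:ℝ)/2) (1/2)) ∩
        {p : ℝ × ℝ | c * p.1 - s * p.2 ≤ -r}) :=
    (measurableSet_Icc.prod measurableSet_Icc).inter
      (measurableSet_le (by fun_prop) measurable_const)
  rw [Measure.volume_eq_prod, Measure.prod_apply hEm]
  have hslice : ∀ x : ℝ, volume (Prod.mk x ⁻¹' ((Set.Icc (-(1:ℝ)/2) (1/2) ×ˢ
          Set.Icc (-(1:ℝ)/2) (1/2)) ∩ {p : ℝ × ℝ | c * p.1 - s * p.2 ≤ -r}))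
      = (Set.Icc (-(1:ℝ)/2) (1/2)).indicator (fun x => ENNReal.ofReal (1/2 - g x)) x := by
    intro x
    by_cases hx : x ∈ Set.Icc (-(1:ℝ)/2) (1/2)
    · rw [Set.indicator_of_mem hx]
      have : Prod.mk x ⁻¹' ((Set.Icc (-(1:ℝ)/2) (1/2) ×ˢ Set.Icc (-(1:ℝ)/2) (1/2)) ∩
          {p : ℝ × ℝ | c * p.1 - s * p.2 ≤ -r}) = Set.Icc (g x) (1/2) := by
        ext y
        rw [hA]
        simp only [Set.mem_preimage, Set.mem_setOf_eq, Set.mem_Icc]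
        constructor
        · rintro ⟨_, h⟩; exact h
        · intro h; exact ⟨by simpa using hx, h⟩
      rw [this, Real.volume_Icc]
    · rw [Set.indicator_of_notMem hx]
      have : Prod.mk x ⁻¹' ((Set.Icc (-(1:ℝ)/2) (1/2) ×ˢ Set.Icc (-(1:ℝ)/2) (1/2)) ∩
          {p : ℝ × ℝ | c * p.1 - s * p.2 ≤ -r}) = ∅ := by
        ext y
        rw [hA]
        simp only [Set.mem_preimage, Set.mem_setOf_eq, Set.mem_empty_iff_false, iff_false,
          not_and]
        intro h
        exact absurd (by simpa using h) hx
      rw [this]; simp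
  rw [lintegral_congr hslice, lintegral_indicator measurableSet_Icc]
  have hint : IntegrableOn (fun x => 1/2 - g x) (Set.Icc (-(1:ℝ)/2) (1/2)) volume :=
    (continuous_const.sub hgc).integrableOn_Icc
  rw [← ofReal_integral_eq_lintegral_ofReal hint ?nn]
  case nn =>
    filter_upwards [ae_restrict_mem measurableSet_Icc] with x hx
    have : (c*x + r)/s ≤ 1/2 := (div_le_iff₀ hs).mpr (by nlinarith [hx.2])
    simp only [hg, Pi.zero_apply, sub_nonneg, max_le_iff]
    exact ⟨by norm_num, this⟩
  congr 1
  -- now compute the real integral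
  set a : ℝ := (-(s/2) - r)/c with ha
  have ha1 : -(1/2 : ℝ) < a := by
    rw [ha, lt_div_iff₀ hc]; nlinarith
  have ha2 : a ≤ 1/2 := by
    rw [ha, div_le_iff₀ hc]; nlinarith
  have hcont : Continuous fun x => 1/2 - g x := continuous_const.sub hgc
  have hac : a * c = -(s/2) - r := by rw [ha]; field_simp
  rw [MeasureTheory.integral_Icc_eq_integral_Ioc,
    ← intervalIntegral.integral_of_le (by norm_num : -(1:ℝ)/2 ≤ 1/2)]
  have hsplit := intervalIntegral.integral_add_adjacent_intervals
    (a := -(1:ℝ)/2) (b := a) (c := 1/2) (μ := volume)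
    (hcont.intervalIntegrable _ _) (hcont.intervalIntegrable _ _)
  rw [show (-(1:ℝ)/2) = -(1/2 : ℝ) by norm_num] at hsplit ⊢
  rw [← hsplit]
  have e1 : (∫ x in (-(1/2 : ℝ))..a, (1/2 - g x)) = a + 1/2 := by
    rw [intervalIntegral.integral_congr (g := fun _ => (1:ℝ))]
    · simp only [intervalIntegral.integral_const, smul_eq_mul, mul_one]
      ring
    · intro x hx
      rw [Set.uIcc_of_le (by linarith)] at hx
      have hxa : x ≤ a := hx.2
      have : (c*x + r)/s ≤ -(1/2) := by
        rw [div_le_iff₀ hs]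
        nlinarith
      simp only [hg]
      rw [max_eq_left this]; norm_num
  have e2 : (∫ x in a..(1/2 : ℝ), (1/2 - g x))
      = (1/2 - r/s)*(1/2 - a) - (c/s)*((1/2)^2 - a^2)/2 := by
    rw [intervalIntegral.integral_congr (g := fun x => (1/2 - r/s) - (c/s)*x)]
    · rw [intervalIntegral.integral_sub (intervalIntegrable_const)
        ((by fun_prop : Continuous fun x : ℝ => c/s*x).intervalIntegrable _ _),
        intervalIntegral.integral_const, intervalIntegral.integral_const_mul, integral_id]
      simp only [smul_eq_mul]
      ring
    · intro x hx
      rw [Set.uIcc_of_le (by linarith)] at hx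
      have hxa : a ≤ x := hx.1
      have h3 : -(1/2) ≤ (c*x + r)/s := by
        rw [le_div_iff₀ hs]
        nlinarith
      simp only [hg]
      rw [max_eq_right h3]
      field_simp
      ring
  rw [e1, e2, ha]
  field_simp
  ring


theorem Ainf_formula_second_range (θ : ℝ) (hθ : θ ∈ Set.Ioo (0:ℝ) (π/4)) (r : ℝ)
    (hr1 : -(Real.sin (θ + π/4) / Real.sqrt 2) ≤ r)
    (hr2 : r < -(Real.cos (θ + π/4) / Real.sqrt 2)) :
    Ainf r θ = 1 - (r + Real.sin (π/4 + θ) / Real.sqrt 2)^2 / Real.sin (2*θ) := by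
  obtain ⟨hθ0, hθ1⟩ := hθ
  have hπ : (0:ℝ) < π := Real.pi_pos
  have hs : 0 < Real.sin θ := Real.sin_pos_of_pos_of_lt_pi hθ0 (by linarith)
  have hc : 0 < Real.cos θ := Real.cos_pos_of_mem_Ioo ⟨by linarith, by linarith⟩
  have hsqrt : Real.sqrt 2 * Real.sqrt 2 = 2 := Real.mul_self_sqrt (by norm_num)
  have hsqrtpos : 0 < Real.sqrt 2 := by positivity
  have hplus : Real.sin (θ + π/4) = (Real.sin θ + Real.cos θ) * (Real.sqrt 2 / 2) := by
    rw [Real.sin_add, Real.sin_pi_div_four, Real.cos_pi_div_four]; ring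
  have hcosp : Real.cos (θ + π/4) = (Real.cos θ - Real.sin θ) * (Real.sqrt 2 / 2) := by
    rw [Real.cos_add, Real.sin_pi_div_four, Real.cos_pi_div_four]; ring
  have hsc : Real.sin θ < Real.cos θ := by
    have h := Real.cos_pos_of_mem_Ioo (show θ + π/4 ∈ Set.Ioo (-(π/2)) (π/2) from
      ⟨by linarith, by linarith⟩)
    rw [hcosp] at h
    nlinarith
  have ediv : ∀ u : ℝ, u * (Real.sqrt 2 / 2) / Real.sqrt 2 = u / 2 := by
    intro u
    rw [div_eq_div_iff (ne_of_gt hsqrtpos) (by norm_num : (2:ℝ) ≠ 0)]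
    nlinarith [hsqrt]
  have h1 : -((Real.sin θ + Real.cos θ)/2) ≤ r := by
    rw [hplus, ediv] at hr1; exact hr1
  have h2 : r < (Real.sin θ - Real.cos θ)/2 := by
    rw [hcosp, ediv] at hr2
    linarith [hr2]
  unfold Ainf
  rw [step1, step2, volE (Real.cos θ) (Real.sin θ) r hc hs hsc h1 h2,
    ENNReal.toReal_ofReal ?pos]
  case pos =>
    rw [sub_nonneg, div_le_one (by positivity)]
    nlinarith
  rw [show π/4 + θ = θ + π/4 by ring, hplus, ediv, Real.sin_two_mul]
end

section
/- For θ ∈ (0, π/4) and -cos(θ+π/4)/√2 ≤ r < cos(θ+π/4)/√2, one has A_∞(r,θ) = tan(θ)/2 - (r - cos(π/4+θ)/√2)/cos(θ). -/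
/-!
The tilted square is the image of the axis-parallel square `[-1/2, 1/2]²` under a rotation
followed by a translation, which preserves area; so `A_∞(r, θ)` is the area of the part of the
axis-parallel square where `r + x cos θ - y sin θ ≤ 0`. In the middle range of `r` this line
meets both horizontal sides of the square, so the slice at height `y` is exactly
`[-1/2, (y sin θ - r) / cos θ]`, and integrating its length over `y` gives `1/2 - r / cos θ`.
-/

open Real MeasureTheory

open Set Pointwise

theorem measure_prod_region_between_cc_swap_eq_integral {α : Type*} [MeasurableSpace α]
    {μ : Measure α} [SigmaFinite μ] {f g : α → ℝ} {s : Set α}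
    (hf : Measurable f) (hg : Measurable g) (hs : MeasurableSet s)
    (hfi : IntegrableOn f s μ) (hgi : IntegrableOn g s μ) (hfg : ∀ y ∈ s, f y ≤ g y) :
    (volume.prod μ) {p : ℝ × α | p.2 ∈ s ∧ p.1 ∈ Icc (f p.2) (g p.2)} =
      ENNReal.ofReal (∫ y in s, g y - f y ∂μ) := by
  have hslice (y : α) :
      volume ((fun x => (x, y)) ⁻¹' {p : ℝ × α | p.2 ∈ s ∧ p.1 ∈ Icc (f p.2) (g p.2)}) =
        s.indicator (fun y => ENNReal.ofReal (g y - f y)) y := by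
    by_cases hy : y ∈ s
    · rw [indicator_of_mem hy, ← Real.volume_Icc]
      congr 1
      ext x
      simp [hy]
    · simp [hy]
  have hmeas : MeasurableSet {p : ℝ × α | p.2 ∈ s ∧ p.1 ∈ Icc (f p.2) (g p.2)} :=
    (measurableSet_region_between_cc hf hg hs).preimage measurable_swap
  rw [Measure.prod_apply_symm hmeas, funext hslice, lintegral_indicator hs]
  exact (ofReal_integral_eq_lintegral_ofReal (hgi.sub hfi)
    ((ae_restrict_iff' hs).2 (ae_of_all _ fun y hy => sub_nonneg.2 (hfg y hy)))).symm

noncomputable def planeRotation (θ : ℝ) : (ℝ × ℝ) →ₗ[ℝ] ℝ × ℝ where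
  toFun p := (p.1 * cos θ - p.2 * sin θ, p.1 * sin θ + p.2 * cos θ)
  map_add' p q := by ext <;> simp <;> ring
  map_smul' c p := by ext <;> simp <;> ring

theorem det_planeRotation (θ : ℝ) : LinearMap.det (planeRotation θ) = 1 := by
  rw [← LinearMap.det_toMatrix (Module.Basis.finTwoProd ℝ), Matrix.det_fin_two]
  simp [LinearMap.toMatrix_apply, planeRotation]
  linear_combination cos_sq_add_sin_sq θ

theorem volume_image_add_planeRotation (v : ℝ × ℝ) (θ : ℝ) (A : Set (ℝ × ℝ)) :
    volume ((fun p => v + planeRotation θ p) '' A) = volume A := by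
  have himage : (fun p => v + planeRotation θ p) '' A = v +ᵥ planeRotation θ '' A := by
    rw [← image_vadd, image_image]
    rfl
  rw [himage, measure_vadd, Measure.addHaar_image_linearMap, det_planeRotation]
  simp

theorem tiltedSquare_eq_image (r θ : ℝ) :
    tiltedSquare r θ = (fun p => ((r, 0) : ℝ × ℝ) + planeRotation θ p) ''
      {p | |p.1| ≤ 1/2 ∧ |p.2| ≤ 1/2} := by
  ext p
  constructor
  · rintro ⟨x, y, hx, hy, rfl⟩
    exact ⟨(x, y), ⟨hx, hy⟩, by simp [planeRotation]; ring⟩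
  · rintro ⟨⟨x, y⟩, ⟨hx, hy⟩, rfl⟩
    exact ⟨x, y, hx, hy, by simp [planeRotation]; ring⟩

theorem square_inter_preimage_left_halfPlane {r θ : ℝ} (hc : 0 < cos θ) (hs : 0 ≤ sin θ)
    (hr : |r| ≤ (cos θ - sin θ) / 2) :
    {p : ℝ × ℝ | |p.1| ≤ 1/2 ∧ |p.2| ≤ 1/2} ∩
        (fun p => ((r, 0) : ℝ × ℝ) + planeRotation θ p) ⁻¹' {q | q.1 ≤ 0} =
      {p | p.2 ∈ Icc (-(1/2)) (1/2) ∧ p.1 ∈ Icc (-(1/2)) ((p.2 * sin θ - r) / cos θ)} := by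
  ext ⟨x, y⟩
  obtain ⟨hr1, hr2⟩ := abs_le.1 hr
  simp only [mem_inter_iff, mem_ofPred_eq, mem_preimage, mem_Icc, abs_le, planeRotation,
    LinearMap.coe_mk, AddHom.coe_mk, Prod.fst_add, le_div_iff₀ hc]
  constructor
  · rintro ⟨⟨⟨hx1, _⟩, hy⟩, hline⟩
    exact ⟨hy, by nlinarith, by linarith⟩
  · rintro ⟨⟨hy1, hy2⟩, _, hx⟩
    exact ⟨⟨⟨by linarith, by nlinarith⟩, hy1, hy2⟩, by linarith⟩

theorem Ainf_eq_of_abs_le {r θ : ℝ} (hc : 0 < cos θ) (hs : 0 ≤ sin θ)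
    (hr : |r| ≤ (cos θ - sin θ) / 2) :
    Ainf r θ = 1/2 - r / cos θ := by
  have hlower_le_upper (y : ℝ) (hy : y ∈ Icc (-(1/2) : ℝ) (1/2)) :
      -(1/2) ≤ (y * sin θ - r) / cos θ := by
    rw [le_div_iff₀ hc]
    nlinarith [hy.1, (abs_le.1 hr).2]
  have hintegral :
      ∫ y in Icc (-(1/2) : ℝ) (1/2), (y * sin θ - r) / cos θ - -(1/2) = 1/2 - r / cos θ := by
    rw [integral_Icc_eq_integral_Ioc, ← intervalIntegral.integral_of_le (by norm_num),
      intervalIntegral.integral_sub ((by fun_prop : Continuous _).intervalIntegrable _ _)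
        intervalIntegrable_const, intervalIntegral.integral_div,
      intervalIntegral.integral_sub ((by fun_prop : Continuous _).intervalIntegrable _ _)
        intervalIntegrable_const, intervalIntegral.integral_mul_const, integral_id]
    simp
    ring
  have hvolume :
      volume (tiltedSquare r θ ∩ {p | p.1 ≤ 0}) = ENNReal.ofReal (1/2 - r / cos θ) := by
    rw [tiltedSquare_eq_image, ← image_inter_preimage, volume_image_add_planeRotation,
      square_inter_preimage_left_halfPlane hc hs hr, Measure.volume_eq_prod,
      measure_prod_region_between_cc_swap_eq_integral measurable_const (by fun_prop)
        measurableSet_Icc continuous_const.integrableOn_Icc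
        (Continuous.integrableOn_Icc (by fun_prop)) hlower_le_upper, hintegral]
  rw [Ainf, hvolume, ENNReal.toReal_ofReal (hintegral ▸ setIntegral_nonneg measurableSet_Icc
    fun y hy => sub_nonneg.2 (hlower_le_upper y hy))]

theorem cos_add_pi_div_four_div_sqrt_two (θ : ℝ) :
    cos (θ + π/4) / √2 = (cos θ - sin θ) / 2 := by
  rw [cos_add, cos_pi_div_four, sin_pi_div_four]
  field_simp

theorem Ainf_formula_middle_range (θ : ℝ) (hθ : θ ∈ Set.Ioo (0:ℝ) (π/4)) (r : ℝ)
    (hr1 : -(Real.cos (θ + π/4) / Real.sqrt 2) ≤ r)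
    (hr2 : r < Real.cos (θ + π/4) / Real.sqrt 2) :
    Ainf r θ = Real.tan θ / 2 - (r - Real.cos (π/4 + θ) / Real.sqrt 2) / Real.cos θ := by
  obtain ⟨hθ0, hθ4⟩ := hθ
  have hc : 0 < cos θ := cos_pos_of_mem_Ioo ⟨by linarith [pi_pos], by linarith⟩
  have hs : 0 < sin θ := sin_pos_of_pos_of_lt_pi hθ0 (by linarith [pi_pos])
  rw [cos_add_pi_div_four_div_sqrt_two] at hr1 hr2
  rw [Ainf_eq_of_abs_le hc hs.le (abs_le.2 ⟨hr1, hr2.le⟩), tan_eq_sin_div_cos, add_comm (π/4),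
    cos_add_pi_div_four_div_sqrt_two]
  field_simp
  ring
end
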